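/- arXiv:2204.11208 — 5 statements merged into one kernel-verified Lean document; each statement's English description precedes it below -/
import Mathlib

section
/- Let q = 2^m with m ≥ 3 odd. The number of unordered pairs {x, y} of distinct elements of F_q \ {0,1} satisfying x·y^2 + y·x^2 + x + y = 0 (equivalently (y^2+1)x + (x^2+1)y = 0) is exactly (q−2)/2. -/
/-!
A field of order `2 ^ m` has characteristic two, where the equation factors as
`(x + y) * (x * y + 1) = 0`; for distinct `x, y` it therefore says exactly `y = x⁻¹`. The solutions
are the orbits `{x, x⁻¹}` of inversion on `F \ {0, 1}`, an involution without fixed points there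
(`x * x = 1` means `x = ±1 = 1`), so they split the `q - 2` elements into `(q - 2) / 2` pairs.
-/

theorem Finset.card_eq_two_and_exists_ne_iff {α : Type*} [DecidableEq α] {s : Finset α}
    {P : α → α → Prop} :
    (s.card = 2 ∧ ∃ x ∈ s, ∃ y ∈ s, x ≠ y ∧ P x y) ↔ ∃ x y, x ≠ y ∧ P x y ∧ s = {x, y} := by
  constructor
  · rintro ⟨hs, x, hx, y, hy, hxy, hP⟩
    have hsub : ({x, y} : Finset α) ⊆ s := Finset.insert_subset hx (Finset.singleton_subset_iff.2 hy)
    exact ⟨x, y, hxy, hP, (Finset.eq_of_subset_of_card_le hsub (by simp [hs, hxy])).symm⟩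
  · rintro ⟨x, y, hxy, hP, rfl⟩
    exact ⟨Finset.card_pair hxy, x, by simp, y, by simp, hxy, hP⟩

theorem Finset.card_image_pair_mul_two {α : Type*} [DecidableEq α] (A : Finset α) (σ : α → α)
    (hmaps : ∀ x ∈ A, σ x ∈ A) (hinvol : ∀ x ∈ A, σ (σ x) = x) (hne : ∀ x ∈ A, σ x ≠ x) :
    (A.image fun x => ({x, σ x} : Finset α)).card * 2 = A.card := by
  set pair : α → Finset α := fun x => {x, σ x}
  have hfiber : ∀ s ∈ A.image pair, (A.filter fun x => pair x = s).card = 2 := by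
    intro s hs
    obtain ⟨x, hx, rfl⟩ := Finset.mem_image.1 hs
    have : A.filter (fun y => pair y = pair x) = {x, σ x} := by
      ext y
      simp only [Finset.mem_filter, Finset.mem_insert, Finset.mem_singleton]
      constructor
      · rintro ⟨-, hy⟩
        have hmem : y ∈ pair x := hy ▸ Finset.mem_insert_self y {σ y}
        simpa [pair] using hmem
      · rintro (rfl | rfl)
        · exact ⟨hx, rfl⟩
        · exact ⟨hmaps x hx, by simp only [pair, hinvol x hx, Finset.pair_comm]⟩
    rw [this, Finset.card_pair (hne x hx).symm]
  rw [Finset.card_eq_sum_card_fiberwise fun x hx => Finset.mem_image_of_mem pair hx,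
    Finset.sum_congr rfl hfiber, Finset.sum_const, smul_eq_mul]

namespace CharTwo

variable {F : Type*} [Field F] [CharP F 2]

theorem inv_ne_self {x : F} (h0 : x ≠ 0) (h1 : x ≠ 1) : x⁻¹ ≠ x := by
  intro h
  have hsq : x * x = 1 := by
    nth_rewrite 2 [← h]
    exact mul_inv_cancel₀ h0
  simpa [CharTwo.neg_eq, h1] using mul_self_eq_one_iff.1 hsq

theorem mul_sq_add_mul_sq_add_add_eq_zero_iff {x y : F} (hxy : x ≠ y) :
    x * y ^ 2 + y * x ^ 2 + x + y = 0 ↔ x * y = 1 := by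
  have hfactor : x * y ^ 2 + y * x ^ 2 + x + y = (x + y) * (x * y + 1) := by ring
  rw [hfactor, mul_eq_zero, CharTwo.add_eq_zero, CharTwo.add_eq_zero]
  exact or_iff_right hxy

theorem setOf_card_two_solutions_eq_image [Fintype F] [DecidableEq F] :
    {s : Finset F | s.card = 2 ∧ ∃ x ∈ s, ∃ y ∈ s, x ≠ y ∧
      x ≠ 0 ∧ x ≠ 1 ∧ y ≠ 0 ∧ y ≠ 1 ∧ x * y ^ 2 + y * x ^ 2 + x + y = 0} =
      ↑(({0, 1}ᶜ : Finset F).image fun x => ({x, x⁻¹} : Finset F)) := by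
  ext s
  simp only [Set.mem_ofPred_eq, Finset.card_eq_two_and_exists_ne_iff, Finset.coe_image,
    Set.mem_image, Finset.mem_coe, Finset.mem_compl, Finset.mem_insert, Finset.mem_singleton,
    not_or]
  constructor
  · rintro ⟨x, y, hxy, ⟨hx0, hx1, -, -, hcurve⟩, rfl⟩
    have hy : y = x⁻¹ :=
      eq_inv_of_mul_eq_one_right ((mul_sq_add_mul_sq_add_add_eq_zero_iff hxy).1 hcurve)
    exact ⟨x, ⟨hx0, hx1⟩, by rw [hy]⟩
  · rintro ⟨x, ⟨hx0, hx1⟩, rfl⟩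
    have hne : x ≠ x⁻¹ := (inv_ne_self hx0 hx1).symm
    exact ⟨x, x⁻¹, hne, ⟨hx0, hx1, inv_ne_zero hx0, inv_ne_one.2 hx1,
      (mul_sq_add_mul_sq_add_add_eq_zero_iff hne).2 (mul_inv_cancel₀ hx0)⟩, rfl⟩

end CharTwo

theorem stmt_6_general {F : Type*} [Field F] [Fintype F] (m : ℕ)
    (hcard : Fintype.card F = 2 ^ m) :
    Set.ncard {s : Finset F | s.card = 2 ∧ ∃ x ∈ s, ∃ y ∈ s, x ≠ y ∧
      x ≠ 0 ∧ x ≠ 1 ∧ y ≠ 0 ∧ y ≠ 1 ∧ x * y ^ 2 + y * x ^ 2 + x + y = 0} =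
      (2 ^ m - 2) / 2 := by
  classical
  have : CharP F 2 := charP_of_card_eq_prime_pow hcard
  have hA : ∀ x, x ∈ ({0, 1}ᶜ : Finset F) ↔ x ≠ 0 ∧ x ≠ 1 := by simp
  have hpairs := ({0, 1}ᶜ : Finset F).card_image_pair_mul_two (·⁻¹)
    (fun x hx => (hA _).2 ⟨inv_ne_zero ((hA x).1 hx).1, inv_ne_one.2 ((hA x).1 hx).2⟩)
    (fun x _ => inv_inv x) (fun x hx => CharTwo.inv_ne_self ((hA x).1 hx).1 ((hA x).1 hx).2)
  have hAcard : ({0, 1}ᶜ : Finset F).card = 2 ^ m - 2 := by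
    rw [Finset.card_compl, Finset.card_pair zero_ne_one, hcard]
  rw [CharTwo.setOf_card_two_solutions_eq_image, Set.ncard_coe_finset]
  omega

theorem stmt_6 {F : Type*} [Field F] [Fintype F] (m : ℕ) (hm : 3 ≤ m) (hodd : Odd m)
    (hcard : Fintype.card F = 2 ^ m) :
    Set.ncard {s : Finset F | s.card = 2 ∧ ∃ x ∈ s, ∃ y ∈ s, x ≠ y ∧
      x ≠ 0 ∧ x ≠ 1 ∧ y ≠ 0 ∧ y ≠ 1 ∧ x * y ^ 2 + y * x ^ 2 + x + y = 0} =
      (2 ^ m - 2) / 2 :=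
  stmt_6_general m hcard
end

section
/- Let q = 2^m with m ≥ 2 and let C be the linear code over F_q of length q+1 generated by the rows of the 3×(q+1) matrix whose first q−1 columns are (1, α, α^2)^T for α ∈ F_q^*, followed by columns (1,0,0)^T and (0,1,1)^T. Then every nonzero codeword of C has Hamming weight at least q−2. -/
/-!
The column `(1,0,0)ᵀ` is `(1, 0, 0²)ᵀ`, so on all but the last coordinate a codeword
`a·r₀ + b·r₁ + d·r₂` is the evaluation of `a + b X + d X²` at the `q` distinct points
`α₁, …, α_{q-1}, 0`. A nonzero polynomial of degree at most `2` has at most two roots, so a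
nonzero codeword vanishes at most twice there and at most three times in all.
-/

/-- Generator matrix with columns `(1, α, α²)ᵀ` for `α` ranging over the nonzero
elements of `F` (enumerated by `α`), followed by the columns `(1,0,0)ᵀ` and `(0,1,1)ᵀ`. -/
def genMatrix {F : Type*} [Field F] [Fintype F]
    (α : Fin (Fintype.card F - 1) → F) :
    Matrix (Fin 3) (Fin (Fintype.card F + 1)) F :=
  fun i j =>
    if h : (j : ℕ) < Fintype.card F - 1 then (α ⟨j, h⟩) ^ (i : ℕ)
    else if (j : ℕ) = Fintype.card F - 1 then (if i = 0 then 1 else 0)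
    else (if i = 0 then 0 else 1)

open Finset Polynomial

theorem hammingNorm_add_card_filter_eq_zero {ι β : Type*} [Fintype ι] [Zero β] [DecidableEq β]
    (x : ι → β) : hammingNorm x + #{i | x i = 0} = Fintype.card ι := by
  simpa only [hammingNorm, not_not, card_univ] using
    card_filter_add_card_filter_not (s := univ) (fun i => x i ≠ 0)

theorem card_filter_sum_mul_pow_eq_zero_lt {ι R : Type*} [CommRing R] [IsDomain R]
    [DecidableEq R] {n : ℕ} {g : Fin n → R} (hg : g ≠ 0) {v : ι → R} {s : Finset ι}
    (hv : Set.InjOn v s) : #{i ∈ s | ∑ k, g k * v i ^ (k : ℕ) = 0} < n := by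
  by_contra! h
  have eval_ofFn : ∀ x, (ofFn n g).eval x = ∑ k, g k * x ^ (k : ℕ) := fun x => by
    simp [ofFn_eq_sum_monomial, eval_finsetSum]
  refine hg (injective_ofFn n ?_)
  rw [map_zero]
  refine eq_zero_of_degree_lt_of_eval_index_eq_zero _ (hv.mono (filter_subset _ s))
    ((ofFn_degree_lt g).trans_le (by exact_mod_cast h)) fun i hi => ?_
  rw [eval_ofFn]
  exact (mem_filter.1 hi).2

section genMatrix

variable {F : Type*} [Field F] [Fintype F] (α : Fin (Fintype.card F - 1) → F)

-- The value at the last column `(0,1,1)ᵀ`, which is not an evaluation column, is junk.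
def genPoint (j : Fin (Fintype.card F + 1)) : F :=
  if h : (j : ℕ) < Fintype.card F - 1 then α ⟨j, h⟩ else 0

theorem genMatrix_apply_of_ne_last {j : Fin (Fintype.card F + 1)} (hj : j ≠ Fin.last _)
    (i : Fin 3) : genMatrix α i j = genPoint α j ^ (i : ℕ) := by
  have hj' : (j : ℕ) < Fintype.card F := Fin.val_lt_last hj
  by_cases h : (j : ℕ) < Fintype.card F - 1
  · simp [genMatrix, genPoint, h]
  · have hjq : (j : ℕ) = Fintype.card F - 1 := by omega
    fin_cases i <;> simp [genMatrix, genPoint, hjq]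

theorem genPoint_injOn (hinj : Function.Injective α) (h0 : ∀ i, α i ≠ 0) :
    Set.InjOn (genPoint α) {j | j ≠ Fin.last _} := by
  intro j hj k hk hjk
  have hj' := Fin.val_lt_last hj
  have hk' := Fin.val_lt_last hk
  simp only [genPoint] at hjk
  split_ifs at hjk with h1 h2 h2
  · exact Fin.ext (by simpa using congrArg Fin.val (hinj hjk))
  · exact absurd hjk (h0 _)
  · exact absurd hjk.symm (h0 _)
  · ext
    omega

theorem card_filter_eq_zero_le_three_of_mem_span_genMatrix [DecidableEq F] (hinj : Function.Injective α)
    (h0 : ∀ i, α i ≠ 0) {c : Fin (Fintype.card F + 1) → F}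
    (hc : c ∈ Submodule.span F (Set.range (genMatrix α))) (hc0 : c ≠ 0) :
    #{j | c j = 0} ≤ 3 := by
  obtain ⟨g, rfl⟩ := (Submodule.mem_span_range_iff_exists_fun F).1 hc
  have hg : g ≠ 0 := by
    rintro rfl
    simp at hc0
  have coord : ∀ j ≠ Fin.last _,
      (∑ i, g i • genMatrix α i) j = ∑ k, g k * genPoint α j ^ (k : ℕ) := fun j hj => by
    simp [genMatrix_apply_of_ne_last α hj]
  have hroots := card_filter_sum_mul_pow_eq_zero_lt (s := univ.erase (Fin.last _)) hg
    ((genPoint_injOn α hinj h0).mono fun j hj => (mem_erase.1 hj).1)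
  calc #{j | (∑ i, g i • genMatrix α i) j = 0}
      ≤ #(insert (Fin.last _) {j ∈ univ.erase (Fin.last _) |
          ∑ k, g k * genPoint α j ^ (k : ℕ) = 0}) := by
        refine card_le_card fun j hj => ?_
        rcases eq_or_ne j (Fin.last _) with rfl | hj'
        · exact mem_insert_self _ _
        · refine mem_insert_of_mem (mem_filter.2 ⟨mem_erase.2 ⟨hj', mem_univ _⟩, ?_⟩)
          rw [← coord j hj']
          exact (mem_filter.1 hj).2
    _ ≤ 3 := (card_insert_le _ _).trans (by omega)

end genMatrix

theorem stmt_12_general {F : Type*} [Field F] [Fintype F] [DecidableEq F]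
    (α : Fin (Fintype.card F - 1) → F) (hinj : Function.Injective α)
    (h0 : ∀ i, α i ≠ 0) :
    ∀ c ∈ (Submodule.span F (Set.range (genMatrix α)) :
        Submodule F (Fin (Fintype.card F + 1) → F)),
      c ≠ 0 → Fintype.card F - 2 ≤ hammingNorm c := by
  intro c hc hc0
  have hsplit := hammingNorm_add_card_filter_eq_zero c
  have hzeros := card_filter_eq_zero_le_three_of_mem_span_genMatrix α hinj h0 hc hc0
  rw [Fintype.card_fin] at hsplit
  omega

theorem stmt_12 {F : Type*} [Field F] [Fintype F] [DecidableEq F] (m : ℕ) (hm : 2 ≤ m)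
    (hcard : Fintype.card F = 2 ^ m)
    (α : Fin (Fintype.card F - 1) → F) (hinj : Function.Injective α)
    (h0 : ∀ i, α i ≠ 0) :
    ∀ c ∈ (Submodule.span F (Set.range (genMatrix α)) :
        Submodule F (Fin (Fintype.card F + 1) → F)),
      c ≠ 0 → Fintype.card F - 2 ≤ hammingNorm c :=
  stmt_12_general α hinj h0
end

section
/- Let q = 2^m with m ≥ 2 and let C be the [q+1, 3] linear code over F_q generated by the matrix with columns (1, α, α^2)^T for α ∈ F_q^* followed by (1,0,0)^T and (0,1,1)^T. Then the dual code C⊥ has minimum distance 3; in particular, any two columns of the generator matrix are linearly independent over F_q, and there exist three linearly dependent columns. -/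
/-!
Only the first two rows matter for independence: they are the columns `(1, a)` for `a ≠ 0`,
`(1, 0)` and `(0, 1)`, pairwise non-proportional, so every `2 × 2` minor from these rows is
nonzero. Hence any two columns are independent, and a nonzero dual word of weight at most two
would be a dependence between two columns. Conversely, since `α` hits every nonzero element,
`(1, 1, 1)ᵀ` is a column, and in characteristic two `(1, 1, 1) + (1, 0, 0) + (0, 1, 1) = 0`
gives a dual word of weight three.
-/

open Matrix

section Dual
variable {R : Type*} [CommSemiring R] {m n : Type*} [Fintype m] [Fintype n]

theorem forall_mem_span_rows_dotProduct_eq_zero_iff (M : Matrix m n R) (v : n → R) :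
    (∀ c ∈ Submodule.span R (Set.range M), v ⬝ᵥ c = 0) ↔ M *ᵥ v = 0 := by
  refine ⟨fun h ↦ funext fun i ↦ ?_, fun h ↦ ?_⟩
  · rw [mulVec, dotProduct_comm]
    exact h _ (Submodule.subset_span ⟨i, rfl⟩)
  · rw [show Submodule.span R (Set.range M) = LinearMap.range M.vecMulLinear from
      (range_vecMulLinear M).symm]
    rintro _ ⟨a, rfl⟩
    rw [vecMulLinear_apply, dotProduct_comm, ← dotProduct_mulVec, h, dotProduct_zero]
end Dual

theorem linearIndependent_pair_of_mul_sub_mul_ne_zero {K ι : Type*} [Field K] {x y : ι → K}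
    (i₁ i₂ : ι) (h : x i₁ * y i₂ - x i₂ * y i₁ ≠ 0) : LinearIndependent K ![x, y] := by
  refine LinearIndependent.pair_iff.mpr fun s t hst ↦ ?_
  have h₁ : s * x i₁ + t * y i₁ = 0 := by simpa using congrFun hst i₁
  have h₂ : s * x i₂ + t * y i₂ = 0 := by simpa using congrFun hst i₂
  refine ⟨(mul_eq_zero.mp ?_).resolve_right h, (mul_eq_zero.mp ?_).resolve_right h⟩
  · linear_combination y i₂ * h₁ - y i₁ * h₂
  · linear_combination x i₁ * h₂ - x i₂ * h₁

section HammingWeight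
variable {K : Type*} [Field K] {m n : Type*} [Fintype n] [DecidableEq K]

theorem three_le_hammingNorm_of_mulVec_eq_zero {M : Matrix m n K}
    (hM : ∀ j₁ j₂, j₁ ≠ j₂ → LinearIndependent K ![M.col j₁, M.col j₂])
    {j₁ j₂ : n} (hj : j₁ ≠ j₂)
    {v : n → K} (hv : M *ᵥ v = 0) (hv₀ : v ≠ 0) : 3 ≤ hammingNorm v := by
  classical
  by_contra! hlt
  obtain ⟨T, hsupp, hT⟩ := Finset.exists_superset_card_eq (s := {j | v j ≠ 0})
    (Nat.lt_succ_iff.mp hlt) (Finset.card_pair hj ▸ Finset.card_le_univ _)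
  obtain ⟨a, b, hab, rfl⟩ := Finset.card_eq_two.mp hT
  have hzero : ∀ j ∉ ({a, b} : Finset n), v j = 0 := fun j hj ↦ by
    by_contra h; exact hj (hsupp (by simpa using h))
  have hsum : v a • M.col a + v b • M.col b = 0 := calc
    _ = ∑ j ∈ {a, b}, v j • M.col j := (Finset.sum_pair hab).symm
    _ = ∑ j, v j • M.col j :=
      Finset.sum_subset (Finset.subset_univ _) fun j _ hj ↦ by rw [hzero j hj, zero_smul]
    _ = M *ᵥ v := by ext i; simp [mulVec, dotProduct, mul_comm]
    _ = 0 := hv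
  obtain ⟨ha, hb⟩ := LinearIndependent.pair_iff.mp (hM a b hab) _ _ hsum
  refine hv₀ (funext fun j ↦ ?_)
  by_cases hj : j ∈ ({a, b} : Finset n)
  · rcases Finset.mem_insert.mp hj with rfl | hj
    · exact ha
    · rwa [Finset.mem_singleton.mp hj]
  · exact hzero j hj

theorem exists_mulVec_eq_zero_hammingNorm_eq_three [DecidableEq n] {M : Matrix m n K}
    {a b c : n} (hab : a ≠ b) (hac : a ≠ c) (hbc : b ≠ c)
    (h : M.col a + M.col b + M.col c = 0) : ∃ v, M *ᵥ v = 0 ∧ hammingNorm v = 3 := by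
  set T : Finset n := {a, b, c}
  refine ⟨fun j ↦ if j ∈ T then 1 else 0, funext fun i ↦ ?_, ?_⟩
  · simp only [mulVec, dotProduct, mul_ite, mul_one, mul_zero]
    rw [Finset.sum_ite_mem, Finset.univ_inter, Finset.sum_insert (by simp [hab, hac]),
      Finset.sum_pair hbc, ← add_assoc]
    exact congrFun h i
  · simp only [hammingNorm, ne_eq, ite_eq_right_iff, one_ne_zero, imp_false, not_not,
      Finset.filter_mem_eq_inter, Finset.univ_inter]
    rw [Finset.card_insert_of_notMem (by simp [hab, hac]), Finset.card_pair hbc]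

end HammingWeight

theorem two_eq_zero_of_card_eq_two_pow {F : Type*} [Field F] [Fintype F] {m : ℕ}
    (hcard : Fintype.card F = 2 ^ m) : (2 : F) = 0 := by
  have h := FiniteField.cast_card_eq_zero F
  rw [hcard, Nat.cast_pow, Nat.cast_ofNat] at h
  exact eq_zero_of_pow_eq_zero h

section GenMatrix
variable {F : Type*} [Field F] [Fintype F] {α : Fin (Fintype.card F - 1) → F}

theorem genMatrix_apply_of_lt {j : Fin (Fintype.card F + 1)}
    (h : (j : ℕ) < Fintype.card F - 1) (i : Fin 3) :
    genMatrix α i j = α ⟨j, h⟩ ^ (i : ℕ) := by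
  simp [genMatrix, h]

theorem genMatrix_apply_of_eq_card_sub_one {j : Fin (Fintype.card F + 1)}
    (h : (j : ℕ) = Fintype.card F - 1) (i : Fin 3) :
    genMatrix α i j = if i = 0 then 1 else 0 := by
  simp [genMatrix, h]

theorem genMatrix_apply_of_eq_card {j : Fin (Fintype.card F + 1)} (h : (j : ℕ) = Fintype.card F)
    (i : Fin 3) : genMatrix α i j = if i = 0 then 0 else 1 := by
  have : 0 < Fintype.card F := Fintype.card_pos
  rw [genMatrix, dif_neg (by omega), if_neg (by omega)]

theorem genMatrix_mul_sub_mul_ne_zero (hinj : Function.Injective α) (h₀ : ∀ k, α k ≠ 0)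
    {j₁ j₂ : Fin (Fintype.card F + 1)} (hj : j₁ ≠ j₂) :
    genMatrix α 0 j₁ * genMatrix α 1 j₂ - genMatrix α 1 j₁ * genMatrix α 0 j₂ ≠ 0 := by
  have hcases : ∀ j : Fin (Fintype.card F + 1), (j : ℕ) < Fintype.card F - 1 ∨
      (j : ℕ) = Fintype.card F - 1 ∨ (j : ℕ) = Fintype.card F := fun j ↦ by omega
  have hj' : (j₁ : ℕ) ≠ j₂ := Fin.val_ne_of_ne hj
  rcases hcases j₁ with h₁ | h₁ | h₁ <;> rcases hcases j₂ with h₂ | h₂ | h₂ <;>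
    simp [genMatrix_apply_of_lt, genMatrix_apply_of_eq_card_sub_one,
      genMatrix_apply_of_eq_card, h₁, h₂, h₀, sub_eq_zero, hinj.eq_iff, Fin.ext_iff] <;> omega

theorem linearIndependent_genMatrix_col_pair (hinj : Function.Injective α)
    (h₀ : ∀ k, α k ≠ 0) {j₁ j₂ : Fin (Fintype.card F + 1)} (hj : j₁ ≠ j₂) :
    LinearIndependent F ![(genMatrix α).col j₁, (genMatrix α).col j₂] :=
  linearIndependent_pair_of_mul_sub_mul_ne_zero 0 1 (genMatrix_mul_sub_mul_ne_zero hinj h₀ hj)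

theorem exists_eq_of_injective_of_ne_zero (hinj : Function.Injective α)
    (h₀ : ∀ k, α k ≠ 0) {x : F} (hx : x ≠ 0) : ∃ k, α k = x := by
  classical
  have hsub : Finset.univ.image α ⊆ Finset.univ.erase 0 := by
    simp [Finset.subset_iff, h₀]
  have himage := Finset.eq_of_subset_of_card_le hsub (by
    rw [Finset.card_image_of_injective _ hinj, Finset.card_erase_of_mem (Finset.mem_univ _)]
    simp)
  have hx' : x ∈ Finset.univ.image α :=
    himage ▸ Finset.mem_erase.mpr ⟨hx, Finset.mem_univ x⟩
  simpa using hx'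

theorem exists_genMatrix_col_add_col_add_col_eq_zero (hinj : Function.Injective α)
    (h₀ : ∀ k, α k ≠ 0) (h2 : (2 : F) = 0) :
    ∃ a b c, a ≠ b ∧ a ≠ c ∧ b ≠ c ∧
      (genMatrix α).col a + (genMatrix α).col b + (genMatrix α).col c = 0 := by
  obtain ⟨k, hk⟩ := exists_eq_of_injective_of_ne_zero hinj h₀ one_ne_zero
  have hk' : (k : ℕ) < Fintype.card F - 1 := k.isLt
  refine ⟨⟨k, by omega⟩, ⟨Fintype.card F - 1, by omega⟩, ⟨Fintype.card F, by omega⟩,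
    by simp [Fin.ext_iff]; omega, by simp [Fin.ext_iff]; omega, by simp [Fin.ext_iff]; omega,
    funext fun i ↦ ?_⟩
  fin_cases i <;>
    simp [genMatrix_apply_of_lt, genMatrix_apply_of_eq_card_sub_one, genMatrix_apply_of_eq_card,
      hk', hk] <;> linear_combination h2

end GenMatrix

theorem stmt_14_general {F : Type*} [Field F] [Fintype F] [DecidableEq F] (m : ℕ)
    (hcard : Fintype.card F = 2 ^ m)
    (α : Fin (Fintype.card F - 1) → F) (hinj : Function.Injective α)
    (h0 : ∀ i, α i ≠ 0) :
    (∀ v : Fin (Fintype.card F + 1) → F,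
        (∀ c ∈ (Submodule.span F (Set.range (genMatrix α)) :
          Submodule F (Fin (Fintype.card F + 1) → F)), ∑ j, v j * c j = 0) →
        v ≠ 0 → 3 ≤ hammingNorm v) ∧
    (∃ v : Fin (Fintype.card F + 1) → F,
        (∀ c ∈ (Submodule.span F (Set.range (genMatrix α)) :
          Submodule F (Fin (Fintype.card F + 1) → F)), ∑ j, v j * c j = 0) ∧
        hammingNorm v = 3) ∧
    (∀ j1 j2 : Fin (Fintype.card F + 1), j1 ≠ j2 →
        LinearIndependent F ![fun i => genMatrix α i j1, fun i => genMatrix α i j2]) ∧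
    (∃ j1 j2 j3 : Fin (Fintype.card F + 1), j1 ≠ j2 ∧ j1 ≠ j3 ∧ j2 ≠ j3 ∧
        ∃ c1 c2 c3 : F, ¬(c1 = 0 ∧ c2 = 0 ∧ c3 = 0) ∧
          ∀ i : Fin 3,
            c1 * genMatrix α i j1 + c2 * genMatrix α i j2 + c3 * genMatrix α i j3 = 0) := by
  have hindep : ∀ j₁ j₂, j₁ ≠ j₂ →
      LinearIndependent F ![(genMatrix α).col j₁, (genMatrix α).col j₂] :=
    fun _ _ ↦ linearIndependent_genMatrix_col_pair hinj h0
  obtain ⟨a, b, c, hab, hac, hbc, habc⟩ :=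
    exists_genMatrix_col_add_col_add_col_eq_zero hinj h0 (two_eq_zero_of_card_eq_two_pow hcard)
  obtain ⟨v, hv, hv₃⟩ := exists_mulVec_eq_zero_hammingNorm_eq_three hab hac hbc habc
  refine ⟨fun w hw hw₀ ↦ ?_, ⟨v, ?_, hv₃⟩, hindep,
    a, b, c, hab, hac, hbc, 1, 1, 1, by simp, fun i ↦ by simpa using congrFun habc i⟩
  · exact three_le_hammingNorm_of_mulVec_eq_zero hindep hab
      ((forall_mem_span_rows_dotProduct_eq_zero_iff _ _).mp hw) hw₀
  · exact (forall_mem_span_rows_dotProduct_eq_zero_iff _ _).mpr hv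

theorem stmt_14 {F : Type*} [Field F] [Fintype F] [DecidableEq F] (m : ℕ) (hm : 2 ≤ m)
    (hcard : Fintype.card F = 2 ^ m)
    (α : Fin (Fintype.card F - 1) → F) (hinj : Function.Injective α)
    (h0 : ∀ i, α i ≠ 0) :
    (∀ v : Fin (Fintype.card F + 1) → F,
        (∀ c ∈ (Submodule.span F (Set.range (genMatrix α)) :
          Submodule F (Fin (Fintype.card F + 1) → F)), ∑ j, v j * c j = 0) →
        v ≠ 0 → 3 ≤ hammingNorm v) ∧
    (∃ v : Fin (Fintype.card F + 1) → F,
        (∀ c ∈ (Submodule.span F (Set.range (genMatrix α)) :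
          Submodule F (Fin (Fintype.card F + 1) → F)), ∑ j, v j * c j = 0) ∧
        hammingNorm v = 3) ∧
    (∀ j1 j2 : Fin (Fintype.card F + 1), j1 ≠ j2 →
        LinearIndependent F ![fun i => genMatrix α i j1, fun i => genMatrix α i j2]) ∧
    (∃ j1 j2 j3 : Fin (Fintype.card F + 1), j1 ≠ j2 ∧ j1 ≠ j3 ∧ j2 ≠ j3 ∧
        ∃ c1 c2 c3 : F, ¬(c1 = 0 ∧ c2 = 0 ∧ c3 = 0) ∧
          ∀ i : Fin 3,
            c1 * genMatrix α i j1 + c2 * genMatrix α i j2 + c3 * genMatrix α i j3 = 0) :=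
  stmt_14_general m hcard α hinj h0
end

section
/- Let q = 2^m with m ≥ 2, and consider the [q+1, 3, q−2] code C generated by the columns (1, α, α^2)^T for α ∈ F_q^* together with (1,0,0)^T and (0,1,1)^T. The number of codewords of weight 3 in the dual code C⊥ is exactly q(q−1)/2. -/
/-!
Label the columns of the generator matrix by `Option F`: `some β` is the column `(1, β, β²)`
(so `some 0` is `(1, 0, 0)`) and `none` is `(0, 1, 1)`. Any three distinct columns
`(1, β, β²)` are independent (Vandermonde), while in characteristic two
`(0, 1, 1) = (1, a, a²) + (1, a + 1, (a + 1)²)` for every `a`. Folding the `none` coordinate of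
a weight-three dual codeword onto `a` and `a + 1`, for `a` in its support, therefore leaves a
vector of weight at most three in the kernel of the Vandermonde map, hence zero. So the
weight-three dual codewords are exactly `x • (e_a + e_{a+1} + e_none)` with `x ≠ 0`, and each
of them comes from exactly the two parameters `(a, x)` and `(a + 1, x)`.
-/

open Finset

theorem Finset.eq_zero_of_sum_mul_pow_eq_zero {R : Type*} [CommRing R] [IsDomain R]
    {s : Finset R} {u : R → R} (h : ∀ i < #s, ∑ x ∈ s, u x * x ^ i = 0) :
    ∀ x ∈ s, u x = 0 := by
  let f : Fin #s → R := fun k => s.equivFin.symm k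
  have hf : Function.Injective f := Subtype.val_injective.comp s.equivFin.symm.injective
  have hv : u ∘ f = 0 := by
    refine Matrix.eq_zero_of_vecMul_eq_zero (Matrix.det_vandermonde_ne_zero_iff.mpr hf) ?_
    funext j
    rw [Pi.zero_apply, ← h j j.isLt, ← Finset.sum_coe_sort s]
    exact s.equivFin.symm.sum_comp (fun x : s => u x * x ^ (j : ℕ))
  intro x hx
  simpa [f] using congrFun hv (s.equivFin ⟨x, hx⟩)

theorem eq_zero_of_hammingNorm_le_of_sum_mul_pow_eq_zero {R : Type*} [CommRing R] [IsDomain R]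
    [Fintype R] [DecidableEq R] {n : ℕ} {u : R → R} (hu : hammingNorm u ≤ n)
    (h : ∀ i < n, ∑ x, u x * x ^ i = 0) : u = 0 := by
  funext x
  by_contra hx
  refine hx (Finset.eq_zero_of_sum_mul_pow_eq_zero (s := {x | u x ≠ 0}) (fun i hi => ?_) x
    (by simpa using hx))
  rw [Finset.sum_filter_of_ne fun y _ hy => left_ne_zero_of_mul hy]
  exact h i (hi.trans_le hu)

theorem forall_mem_span_dotProduct_eq_zero_iff {R n : Type*} [CommSemiring R] [Fintype n]
    (v : n → R) (s : Set (n → R)) :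
    (∀ c ∈ Submodule.span R s, v ⬝ᵥ c = 0) ↔ ∀ c ∈ s, v ⬝ᵥ c = 0 := by
  have := Submodule.span_le (p := LinearMap.ker (dotProductBilin R R v)) (s := s)
  simpa only [SetLike.le_def, LinearMap.mem_ker, Set.subset_def, SetLike.mem_coe,
    dotProductBilin_apply_apply] using this

theorem hammingNorm_comp_equiv {ι κ M : Type*} [Fintype ι] [Fintype κ] [Zero M] [DecidableEq M]
    (v : κ → M) (e : ι ≃ κ) : hammingNorm (v ∘ e) = hammingNorm v := by
  simp only [hammingNorm, Finset.card_filter]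
  exact e.sum_comp fun k => if v k ≠ 0 then 1 else 0

theorem hammingNorm_option {ι M : Type*} [Fintype ι] [Zero M] [DecidableEq M]
    (w : Option ι → M) :
    hammingNorm w = hammingNorm (w ∘ some) + if w none = 0 then 0 else 1 := by
  simp only [hammingNorm, Finset.card_filter, Fintype.sum_option, Function.comp, ne_eq, ite_not]
  exact add_comm _ _

theorem hammingNorm_add_single_add_single_le {ι M : Type*} [Fintype ι] [DecidableEq ι]
    [AddMonoid M] [DecidableEq M] (v : ι → M) {a : ι} (ha : v a ≠ 0) (b : ι) (x y : M) :
    hammingNorm (v + Pi.single a x + Pi.single b y) ≤ hammingNorm v + 1 := by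
  refine (Finset.card_le_card fun β hβ => ?_).trans (Finset.card_insert_le b _)
  simp only [Finset.mem_filter, Finset.mem_univ, true_and, Finset.mem_insert,
    Pi.add_apply] at hβ ⊢
  by_contra! h
  have hβa : β ≠ a := by rintro rfl; exact ha h.2
  simp [hβa, h.1, h.2] at hβ

section

variable {F : Type*} [Field F]

def codeColumn (i : ℕ) : Option F → F
  | some β => β ^ i
  | none => if i = 0 then 0 else 1

theorem codeColumn_none_eq_add [CharP F 2] (a : F) {i : ℕ} (hi : i < 3) :
    codeColumn i none = a ^ i + (a + 1) ^ i := by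
  interval_cases i <;> norm_num [codeColumn]
  · exact CharTwo.two_eq_zero.symm
  · linear_combination (-a) * CharTwo.two_eq_zero (R := F)
  · linear_combination (-a - a ^ 2) * CharTwo.two_eq_zero (R := F)

section

variable [DecidableEq F]

def weightThreeWord (a x : F) (o : Option F) : F :=
  o.elim x (Pi.single a x + Pi.single (a + 1) x)

theorem weightThreeWord_add_one [CharP F 2] (a x : F) :
    weightThreeWord (a + 1) x = weightThreeWord a x := by
  ext (_ | β)
  · rfl
  · simp only [weightThreeWord, Option.elim, Pi.add_apply, add_assoc, CharTwo.add_self_eq_zero,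
      add_zero]
    exact add_comm _ _

theorem weightThreeWord_eq_weightThreeWord_iff [CharP F 2] {a b x y : F} (hx : x ≠ 0) :
    weightThreeWord b y = weightThreeWord a x ↔ y = x ∧ (b = a ∨ b = a + 1) := by
  constructor
  · intro h
    have hy : y = x := congrFun h none
    refine ⟨hy, ?_⟩
    by_contra! hb
    have := congrFun h (some b)
    simp [weightThreeWord, hb.1, hb.2] at this
    exact hx (hy.symm.trans this)
  · rintro ⟨rfl, rfl | rfl⟩
    · rfl
    · exact weightThreeWord_add_one _ _

end

variable [Fintype F]

def IsDualCodeword (w : Option F → F) : Prop :=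
  ∀ i < 3, ∑ o, w o * codeColumn i o = 0

def columnLabel (α : Fin (Fintype.card F - 1) → F) (j : Fin (Fintype.card F + 1)) : Option F :=
  if h : (j : ℕ) < Fintype.card F - 1 then some (α ⟨j, h⟩)
  else if (j : ℕ) = Fintype.card F - 1 then some 0 else none

theorem genMatrix_apply_eq_codeColumn (α : Fin (Fintype.card F - 1) → F) (i : Fin 3)
    (j : Fin (Fintype.card F + 1)) : genMatrix α i j = codeColumn i (columnLabel α j) := by
  unfold genMatrix columnLabel
  split_ifs <;> simp_all [codeColumn]

theorem columnLabel_bijective {α : Fin (Fintype.card F - 1) → F} (hinj : Function.Injective α)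
    (h0 : ∀ i, α i ≠ 0) : Function.Bijective (columnLabel α) := by
  refine (Fintype.bijective_iff_injective_and_card _).mpr ⟨fun j k h => ?_, by simp⟩
  have := Fintype.card_pos (α := F)
  have := j.isLt
  have := k.isLt
  unfold columnLabel at h
  split_ifs at h <;> simp only [Option.some_inj] at h
  · exact Fin.ext (Fin.mk.inj_iff.mp (hinj h))
  · exact absurd h (h0 _)
  · exact absurd h.symm (h0 _)
  all_goals exact Fin.ext (by omega)

theorem forall_mem_span_genMatrix_dotProduct_eq_zero_iff {α : Fin (Fintype.card F - 1) → F}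
    (hα : Function.Bijective (columnLabel α)) (v : Fin (Fintype.card F + 1) → F) :
    (∀ c ∈ Submodule.span F (Set.range (genMatrix α)), v ⬝ᵥ c = 0) ↔
      IsDualCodeword (v ∘ (Equiv.ofBijective _ hα).symm) := by
  set e := Equiv.ofBijective _ hα
  have hrange : (∀ c ∈ Set.range (genMatrix α), v ⬝ᵥ c = 0) ↔
      ∀ i : Fin 3, v ⬝ᵥ genMatrix α i = 0 :=
    ⟨fun h i => h _ ⟨i, rfl⟩, by rintro h _ ⟨i, rfl⟩; exact h i⟩
  rw [forall_mem_span_dotProduct_eq_zero_iff, hrange, Fin.forall_iff, IsDualCodeword]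
  refine forall₂_congr fun i hi => ?_
  rw [dotProduct, ← e.sum_comp]
  simp [genMatrix_apply_eq_codeColumn, e]

variable [DecidableEq F]

theorem sum_mul_codeColumn_eq [CharP F 2] (w : Option F → F) (a : F) {i : ℕ} (hi : i < 3) :
    ∑ o, w o * codeColumn i o =
      ∑ β, (w ∘ some + Pi.single a (w none) + Pi.single (a + 1) (w none) : F → F) β * β ^ i := by
  rw [Fintype.sum_option, codeColumn_none_eq_add a hi]
  simp only [Pi.add_apply, add_mul, Finset.sum_add_distrib, Pi.single_apply, ite_mul, zero_mul,
    Finset.sum_ite_eq', Finset.mem_univ, if_true, Function.comp, codeColumn]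
  ring

theorem isDualCodeword_weightThreeWord [CharP F 2] (a x : F) :
    IsDualCodeword (weightThreeWord a x) := by
  intro i hi
  rw [sum_mul_codeColumn_eq _ a hi, Finset.sum_eq_zero]
  intro β _
  simp only [weightThreeWord, Function.comp, Option.elim, Pi.add_apply]
  linear_combination ((Pi.single a x : F → F) β + (Pi.single (a + 1) x : F → F) β) * β ^ i *
    CharTwo.two_eq_zero (R := F)

theorem hammingNorm_weightThreeWord [CharP F 2] (a : F) {x : F} (hx : x ≠ 0) :
    hammingNorm (weightThreeWord a x) = 3 := by
  have hsupp : ({o | weightThreeWord a x o ≠ 0} : Finset (Option F)) =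
      {none, some a, some (a + 1)} := by
    ext (_ | β) <;> rw [Finset.mem_filter]
    · simp [weightThreeWord, hx]
    · by_cases ha : β = a
      · simp [weightThreeWord, ha, hx]
      · by_cases ha' : β = a + 1 <;> simp [weightThreeWord, ha, ha', hx]
  rw [hammingNorm, hsupp, Finset.card_eq_three]
  exact ⟨_, _, _, by simp, by simp, by simp, rfl⟩

theorem IsDualCodeword.apply_none_ne_zero {w : Option F → F} (hw : IsDualCodeword w)
    (h3 : hammingNorm w = 3) : w none ≠ 0 := by
  intro hx
  have hu : w ∘ some = 0 := by
    refine eq_zero_of_hammingNorm_le_of_sum_mul_pow_eq_zero (n := 3) ?_ fun i hi => ?_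
    · rw [hammingNorm_option, if_pos hx] at h3; omega
    · simpa [Fintype.sum_option, hx, codeColumn] using hw i hi
  rw [hammingNorm_option, hu, hammingNorm_zero, if_pos hx] at h3
  omega

theorem IsDualCodeword.exists_eq_weightThreeWord [CharP F 2] {w : Option F → F}
    (hw : IsDualCodeword w) (h3 : hammingNorm w = 3) :
    ∃ a, w = weightThreeWord a (w none) := by
  set x := w none
  have hx : x ≠ 0 := hw.apply_none_ne_zero h3
  have h2 : hammingNorm (w ∘ some) = 2 := by rw [hammingNorm_option, if_neg hx] at h3; omega
  obtain ⟨a, ha⟩ : ∃ a, w (some a) ≠ 0 := by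
    by_contra! h
    rw [show w ∘ some = 0 from funext h, hammingNorm_zero] at h2
    omega
  have hu : w ∘ some + Pi.single a x + Pi.single (a + 1) x = 0 := by
    refine eq_zero_of_hammingNorm_le_of_sum_mul_pow_eq_zero (n := 3) ?_ fun i hi => ?_
    · have := hammingNorm_add_single_add_single_le (w ∘ some) ha (a + 1) x x
      omega
    · rw [← sum_mul_codeColumn_eq w a hi]; exact hw i hi
  refine ⟨a, funext fun o => ?_⟩
  cases o with
  | none => rfl
  | some β =>
    have hβ := congrFun hu β
    simp only [Pi.add_apply, Function.comp, Pi.zero_apply] at hβ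
    change w (some β) = (Pi.single a x : F → F) β + (Pi.single (a + 1) x : F → F) β
    linear_combination hβ - ((Pi.single a x : F → F) β + (Pi.single (a + 1) x : F → F) β) *
      CharTwo.two_eq_zero (R := F)

theorem ncard_dualCodewords_weight_three_mul_two [CharP F 2] :
    {w : Option F → F | IsDualCodeword w ∧ hammingNorm w = 3}.ncard * 2 =
      Fintype.card F * (Fintype.card F - 1) := by
  let D : Finset (F × F) := (univ : Finset F) ×ˢ ({x | x ≠ 0} : Finset F)
  let f : F × F → Option F → F := fun p => weightThreeWord p.1 p.2
  have hS : {w : Option F → F | IsDualCodeword w ∧ hammingNorm w = 3} = ↑(D.image f) := by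
    ext w
    simp only [Set.mem_ofPred_eq, coe_image, Set.mem_image, coe_product, coe_filter, D, f]
    constructor
    · rintro ⟨hw, h3⟩
      obtain ⟨a, ha⟩ := hw.exists_eq_weightThreeWord h3
      exact ⟨(a, w none), by simpa using hw.apply_none_ne_zero h3, ha.symm⟩
    · rintro ⟨⟨a, x⟩, hx, rfl⟩
      exact ⟨isDualCodeword_weightThreeWord a x, hammingNorm_weightThreeWord a hx.2.2⟩
  have hfiber : ∀ w ∈ D.image f, #{p ∈ D | f p = w} = 2 := by
    simp only [mem_image, mem_product, mem_filter, mem_univ, true_and, D, f]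
    rintro _ ⟨⟨a, x⟩, hx, rfl⟩
    rw [card_eq_two]
    refine ⟨(a, x), (a + 1, x), by simp, ?_⟩
    ext ⟨b, y⟩
    simp only [mem_filter, mem_product, mem_univ, true_and, mem_insert, mem_singleton,
      Prod.mk.injEq]
    constructor
    · rintro ⟨-, h⟩
      rw [weightThreeWord_eq_weightThreeWord_iff hx] at h
      tauto
    · rintro (⟨rfl, rfl⟩ | ⟨rfl, rfl⟩)
      · exact ⟨hx, rfl⟩
      · exact ⟨hx, weightThreeWord_add_one _ _⟩
  rw [hS, Set.ncard_coe_finset]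
  calc #(D.image f) * 2 = ∑ w ∈ D.image f, #{p ∈ D | f p = w} := by
        rw [sum_congr rfl hfiber, sum_const, smul_eq_mul]
    _ = #D := (card_eq_sum_card_image f D).symm
    _ = Fintype.card F * (Fintype.card F - 1) := by
        simp [D, card_product, filter_ne', card_univ]

end

theorem stmt_15_general {F : Type*} [Field F] [Fintype F] [DecidableEq F] (m : ℕ)
    (hcard : Fintype.card F = 2 ^ m)
    (α : Fin (Fintype.card F - 1) → F) (hinj : Function.Injective α)
    (h0 : ∀ i, α i ≠ 0) :
    Set.ncard {v : Fin (Fintype.card F + 1) → F |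
        (∀ c ∈ (Submodule.span F (Set.range (genMatrix α)) :
          Submodule F (Fin (Fintype.card F + 1) → F)), ∑ j, v j * c j = 0) ∧
        hammingNorm v = 3} = 2 ^ m * (2 ^ m - 1) / 2 := by
  have : CharP F 2 := charP_of_card_eq_prime_pow hcard
  have hα := columnLabel_bijective hinj h0
  let reindex := (Equiv.ofBijective _ hα).arrowCongr (Equiv.refl F)
  refine Nat.eq_div_of_mul_eq_left two_ne_zero ?_
  rw [← hcard, ← ncard_dualCodewords_weight_three_mul_two,
    ← Set.ncard_preimage_of_injective_subset_range reindex.injective (by simp)]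
  congr 2
  ext v
  exact and_congr (forall_mem_span_genMatrix_dotProduct_eq_zero_iff hα v)
    (by rw [← hammingNorm_comp_equiv v (Equiv.ofBijective _ hα).symm]; rfl)

theorem stmt_15 {F : Type*} [Field F] [Fintype F] [DecidableEq F] (m : ℕ) (hm : 2 ≤ m)
    (hcard : Fintype.card F = 2 ^ m)
    (α : Fin (Fintype.card F - 1) → F) (hinj : Function.Injective α)
    (h0 : ∀ i, α i ≠ 0) :
    Set.ncard {v : Fin (Fintype.card F + 1) → F |
        (∀ c ∈ (Submodule.span F (Set.range (genMatrix α)) :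
          Submodule F (Fin (Fintype.card F + 1) → F)), ∑ j, v j * c j = 0) ∧
        hammingNorm v = 3} = 2 ^ m * (2 ^ m - 1) / 2 :=
  stmt_15_general m hcard α hinj h0
end

section
/- Let C be an [n, k, n−k] near-MDS code over F_q (i.e., both C and its dual have parameters attaining Singleton defect 1). Then for s ∈ {1, …, k}, the number of codewords of weight n−k+s in C satisfies A_{n−k+s} = binom(n, k−s) · Σ_{j=0}^{s−1} (−1)^j binom(n−k+s, j)(q^{s−j} − 1) + (−1)^s binom(k, s) A_{n−k}. -/
/-!
Write `D(S)` for the number of nonzero codewords supported in `S ⊆ {1, …, n}`. Möbius inversion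
on the Boolean lattice gives `A_t = ∑_{i ≤ t} (-1)^(t-i) C(n-i, t-i) ∑_{|S| = i} D(S)`.
The minimum distance `n - k` makes `D(S) = 0` for `|S| < n - k` and
`∑_{|S| = n-k} D(S) = A_{n-k}`.
The dual distance `k` makes the restriction of `C` to the complement of any `S` with
`|S| > n - k` surjective, so `D(S) = q^(|S| - (n-k)) - 1` there. Substituting these values and
using `C(n-t+j, j) C(n, t-j) = C(n, n-t) C(t, j)` gives the formula.
-/

open Finset

namespace Finset

variable {α : Type*} [DecidableEq α]

theorem sum_filter_superset_neg_one_pow_card_sdiff {R T : Finset α} (hRT : R ⊆ T) :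
    ∑ S ∈ T.powerset with R ⊆ S, (-1 : ℤ) ^ #(T \ S) = if R = T then 1 else 0 := by
  have hcompl : ∑ S ∈ T.powerset with R ⊆ S, (-1 : ℤ) ^ #(T \ S) =
      ∑ U ∈ (T \ R).powerset, (-1 : ℤ) ^ #U := by
    refine sum_nbij' (T \ ·) (T \ ·) ?_ ?_ ?_ ?_ fun _ _ => rfl
    · intro S hS
      rw [mem_filter, mem_powerset] at hS
      exact mem_powerset.2 (sdiff_subset_sdiff subset_rfl hS.2)
    · intro U hU
      rw [mem_powerset, subset_sdiff] at hU
      exact mem_filter.2 ⟨mem_powerset.2 sdiff_subset, subset_sdiff.2 ⟨hRT, hU.2.symm⟩⟩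
    · intro S hS
      exact sdiff_sdiff_eq_self (mem_powerset.1 (mem_filter.1 hS).1)
    · intro U hU
      exact sdiff_sdiff_eq_self ((mem_powerset.1 hU).trans sdiff_subset)
  simp only [hcompl, sum_powerset_neg_one_pow_card, sdiff_eq_empty_iff_subset]
  exact if_congr ⟨hRT.antisymm, fun h => h ▸ subset_rfl⟩ rfl rfl

theorem moebius_inversion_powerset {M : Type*} [AddCommGroup M] {f g : Finset α → M}
    (hfg : ∀ S, g S = ∑ R ∈ S.powerset, f R) (T : Finset α) :
    f T = ∑ S ∈ T.powerset, (-1 : ℤ) ^ #(T \ S) • g S := by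
  simp_rw [hfg, smul_sum]
  rw [sum_comm' (t' := T.powerset) (s' := fun R => {S ∈ T.powerset | R ⊆ S})]
  · simp_rw [← sum_smul]
    rw [sum_eq_single_of_mem T (mem_powerset_self T)]
    · rw [sum_filter_superset_neg_one_pow_card_sdiff subset_rfl, if_pos rfl, one_smul]
    · intro R hR hRT
      rw [sum_filter_superset_neg_one_pow_card_sdiff (mem_powerset.1 hR), if_neg hRT, zero_smul]
  · intro S R
    simp only [mem_powerset, mem_filter]
    exact ⟨fun h => ⟨⟨h.1, h.2⟩, h.2.trans h.1⟩, fun h => ⟨h.1.1, h.1.2⟩⟩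

theorem sum_powersetCard_sum_powerset [Fintype α] {M : Type*} [AddCommMonoid M] (t : ℕ)
    (h : Finset α → M) :
    ∑ T ∈ powersetCard t univ, ∑ S ∈ T.powerset, h S =
      ∑ i ∈ range (t + 1),
        (Fintype.card α - i).choose (t - i) • ∑ S ∈ powersetCard i univ, h S := by
  have hsplit : ∀ T ∈ powersetCard t (univ : Finset α),
      ∑ S ∈ T.powerset, h S = ∑ i ∈ range (t + 1), ∑ S ∈ powersetCard i T, h S := by
    intro T hT
    simp_rw [powersetCard_eq_filter]
    refine (sum_fiberwise_of_maps_to (fun S hS => ?_) h).symm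
    rw [mem_powerset] at hS
    rw [mem_range, Nat.lt_succ_iff, ← (mem_powersetCard.1 hT).2]
    exact card_le_card hS
  rw [sum_congr rfl hsplit, sum_comm]
  refine sum_congr rfl fun i hi => ?_
  rw [sum_comm' (t' := powersetCard i univ) (s' := fun S => {T ∈ powersetCard t univ | S ⊆ T}),
    smul_sum]
  · refine sum_congr rfl fun S hS => ?_
    have hSi := (mem_powersetCard.1 hS).2
    rw [sum_const, card_filter_powersetCard_subset S univ t (subset_univ S)
      (by rw [hSi]; exact Nat.lt_succ_iff.1 (mem_range.1 hi)), card_univ, hSi]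
  · intro T S
    simp only [mem_powersetCard, mem_filter, subset_univ, true_and]
    tauto

theorem sum_powersetCard_eq_sum_range [Fintype α] (f : Finset α → ℤ) (t : ℕ) :
    ∑ T ∈ powersetCard t univ, f T =
      ∑ i ∈ range (t + 1), (-1) ^ (t - i) * ((Fintype.card α - i).choose (t - i) : ℤ) *
        ∑ S ∈ powersetCard i univ, ∑ R ∈ S.powerset, f R := by
  calc ∑ T ∈ powersetCard t univ, f T
      = ∑ T ∈ powersetCard t univ, ∑ S ∈ T.powerset,
          (-1) ^ (t - #S) * ∑ R ∈ S.powerset, f R := by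
        refine sum_congr rfl fun T hT => ?_
        rw [moebius_inversion_powerset (f := f) (fun _ => rfl) T]
        refine sum_congr rfl fun S hS => ?_
        rw [card_sdiff_of_subset (mem_powerset.1 hS), (mem_powersetCard.1 hT).2, smul_eq_mul]
    _ = _ := by
        rw [sum_powersetCard_sum_powerset]
        refine sum_congr rfl fun i _ => ?_
        rw [nsmul_eq_mul, mul_sum, mul_sum]
        refine sum_congr rfl fun S hS => ?_
        rw [(mem_powersetCard.1 hS).2, mul_left_comm, mul_assoc]

theorem sum_card_filter_eq_card_filter_mem {β : Type*} (X : Finset β) (σ : β → Finset α)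
    (s : Finset (Finset α)) :
    ∑ R ∈ s, #{x ∈ X | σ x = R} = #{x ∈ X | σ x ∈ s} := by
  rw [card_eq_sum_card_fiberwise (s := {x ∈ X | σ x ∈ s}) (f := σ) (t := s)
    fun x hx => (mem_filter.1 hx).2]
  refine sum_congr rfl fun R hR => ?_
  rw [filter_filter]
  exact congrArg card (filter_congr fun x _ => ⟨fun h => ⟨h ▸ hR, h⟩, fun h => h.2⟩)

theorem card_filter_card_eq_sum_range [Fintype α] {β : Type*} (X : Finset β)
    (σ : β → Finset α) (t : ℕ) :
    (#{x ∈ X | #(σ x) = t} : ℤ) =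
      ∑ i ∈ range (t + 1), (-1) ^ (t - i) * ((Fintype.card α - i).choose (t - i) : ℤ) *
        ∑ S ∈ powersetCard i univ, (#{x ∈ X | σ x ⊆ S} : ℤ) := by
  have hfiber : ∀ s : Finset (Finset α),
      ∑ R ∈ s, (#{x ∈ X | σ x = R} : ℤ) = #{x ∈ X | σ x ∈ s} := fun s => by
    exact_mod_cast sum_card_filter_eq_card_filter_mem X σ s
  convert sum_powersetCard_eq_sum_range (fun R => (#{x ∈ X | σ x = R} : ℤ)) t using 1 <;>
    simp [hfiber]

end Finset

theorem Nat.choose_sub_sub_mul_choose {n t j : ℕ} (hjt : j ≤ t) (htn : t ≤ n) :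
    (n - (t - j)).choose j * n.choose (t - j) = n.choose (n - t) * t.choose j := by
  have h := Nat.choose_mul (n := n) (k := n - t + j) (s := n - t) (Nat.le_add_right _ _)
  rw [Nat.choose_symm_of_eq_add (show n = n - t + j + (t - j) by omega),
    Nat.choose_symm_add, Nat.add_sub_cancel_left, Nat.sub_sub_self htn] at h
  rw [show n - (t - j) = n - t + j by omega, ← h, mul_comm]

theorem sum_range_alternating_eq_of_piecewise {n k s : ℕ} (hsk : s ≤ k) (hkn : k ≤ n)
    (W : ℕ → ℤ) (q a : ℤ) (hlt : ∀ i < n - k, W i = 0) (heq : W (n - k) = a)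
    (hgt : ∀ i, n - k < i → i ≤ n - k + s → W i = n.choose i * (q ^ (i - (n - k)) - 1)) :
    ∑ i ∈ range (n - k + s + 1),
        (-1) ^ (n - k + s - i) * ((n - i).choose (n - k + s - i) : ℤ) * W i =
      n.choose (k - s) * ∑ j ∈ range s,
          (-1) ^ j * ((n - k + s).choose j : ℤ) * (q ^ (s - j) - 1) +
        (-1) ^ s * (k.choose s : ℤ) * a := by
  set t := n - k + s
  rw [← sum_range_reflect, show t + 1 = s + 1 + (n - k) by omega, sum_range_add,
    sum_range_succ, mul_sum]
  rw [sum_eq_zero (s := range (n - k)) fun j hj => by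
      rw [hlt _ (by have := mem_range.1 hj; omega), mul_zero],
    add_zero, show s + 1 + (n - k) - 1 - s = n - k by omega,
    show t - (n - k) = s by omega, show n - (n - k) = k by omega, heq]
  congr 1
  refine sum_congr rfl fun j hj => ?_
  have hjs := mem_range.1 hj
  have hchoose : ((n - (t - j)).choose j * n.choose (t - j) : ℤ) =
      n.choose (k - s) * t.choose j := by
    rw [show k - s = n - t by omega]
    exact_mod_cast Nat.choose_sub_sub_mul_choose (by omega) (by omega)
  rw [show s + 1 + (n - k) - 1 - j = t - j by omega, show t - (t - j) = j by omega,
    hgt _ (by omega) (by omega), show t - j - (n - k) = s - j by omega]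
  linear_combination (-1) ^ j * (q ^ (s - j) - 1) * hchoose

section HammingSupport

variable {ι M : Type*} [Fintype ι] [Zero M] [DecidableEq M]

/-- `#(hammingSupport x)` is definitionally `hammingNorm x`. -/
def hammingSupport (x : ι → M) : Finset ι := {i | x i ≠ 0}

theorem hammingSupport_subset_iff {x : ι → M} {S : Finset ι} :
    hammingSupport x ⊆ S ↔ ∀ i ∉ S, x i = 0 := by
  simp only [hammingSupport, subset_iff, mem_filter, mem_univ, true_and]
  exact forall_congr' fun i => not_imp_comm

end HammingSupport

/-- A functional on `P → F` killing the restriction of `C` is a dual codeword supported in `P`. -/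
theorem surjective_restrict_of_forall_dotProduct {ι F : Type*} [Fintype ι] [DecidableEq ι]
    [Field F] {C : Submodule F (ι → F)} {P : Finset ι}
    (hP : ∀ v : ι → F, (∀ c ∈ C, v ⬝ᵥ c = 0) → (∀ i ∉ P, v i = 0) → v = 0) :
    Function.Surjective ((LinearMap.funLeft F F ((↑) : P → ι)).comp C.subtype) := by
  rw [← LinearMap.dualMap_injective_iff, injective_iff_map_eq_zero]
  intro ψ hψ
  set δ : ι → P → F := fun i j => if (j : ι) = i then 1 else 0
  set v : ι → F := fun i => ψ (δ i)
  have hv : ∀ x : ι → F, v ⬝ᵥ x = ψ fun j => x j := by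
    intro x
    have hx : (fun j : P => x j) = ∑ i, x i • δ i := by
      ext j
      simp only [δ, Finset.sum_apply, Pi.smul_apply, smul_eq_mul, mul_ite, mul_one, mul_zero,
        sum_ite_eq, mem_univ, if_true]
    rw [hx, map_sum]
    simp only [map_smul, smul_eq_mul, dotProduct, v, mul_comm]
  have hv0 : v = 0 := by
    refine hP v (fun c hc => ?_) fun i hi => ?_
    · rw [hv]
      exact LinearMap.congr_fun hψ ⟨c, hc⟩
    · have : δ i = 0 := funext fun j => if_neg fun h : (j : ι) = i => hi (h ▸ j.2)
      simp [v, this]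
  refine (Pi.basisFun F P).ext fun j => ?_
  have : Pi.basisFun F P j = δ j := by
    ext j'
    simp only [Pi.basisFun_apply, Pi.single_apply, δ, Subtype.ext_iff]
  rw [this, LinearMap.zero_apply]
  exact congrFun hv0 j

section LinearCode

variable {ι F : Type*} [Fintype ι] [DecidableEq ι] [Field F] [Fintype F] [DecidableEq F]

theorem card_filter_forall_eq_zero_of_surjective {C : Submodule F (ι → F)}
    [DecidablePred (· ∈ C)] {P : Finset ι}
    (h : Function.Surjective ((LinearMap.funLeft F F ((↑) : P → ι)).comp C.subtype)) :
    #{c | c ∈ C ∧ ∀ i ∈ P, c i = 0} = Fintype.card F ^ (Module.finrank F C - #P) := by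
  set π := (LinearMap.funLeft F F ((↑) : P → ι)).comp C.subtype
  have hrank : Module.finrank F (LinearMap.ker π) = Module.finrank F C - #P := by
    have := π.finrank_range_add_finrank_ker
    rw [LinearMap.range_eq_top.2 h, finrank_top, Module.finrank_fintype_fun_eq_card,
      Fintype.card_coe] at this
    omega
  have hker : LinearMap.ker π ≃ {c : ι → F // c ∈ C ∧ ∀ i ∈ P, c i = 0} :=
    (Equiv.subtypeEquivRight fun x => by simp [π, funext_iff]).trans
      (Equiv.subtypeSubtypeEquivSubtypeInter (· ∈ C) fun c => ∀ i ∈ P, c i = 0)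
  rw [← hrank, ← Nat.card_eq_fintype_card (α := F),
    ← Module.natCard_eq_pow_finrank (K := F) (V := LinearMap.ker π), Nat.card_congr hker,
    Nat.card_eq_fintype_card, Fintype.card_subtype]

variable (C : Submodule F (ι → F)) [DecidablePred (· ∈ C)]

def nonzeroCodewords : Finset (ι → F) := {c | c ∈ C ∧ c ≠ 0}

theorem ncard_setOf_hammingNorm_eq {i : ℕ} (hi : i ≠ 0) :
    {c | c ∈ C ∧ hammingNorm c = i}.ncard =
      #{c ∈ nonzeroCodewords C | #(hammingSupport c) = i} := by
  rw [← Set.ncard_coe_finset]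
  congr 1
  ext c
  simp only [nonzeroCodewords, coe_filter, mem_filter, mem_univ, true_and, Set.mem_ofPred_eq]
  refine ⟨fun h => ⟨⟨h.1, ?_⟩, h.2⟩, fun h => ⟨h.1.1, h.2⟩⟩
  exact hammingNorm_ne_zero_iff.1 (h.2 ▸ hi)

variable {C}

theorem card_filter_hammingSupport_subset_eq_zero {d : ℕ}
    (hd : ∀ c ∈ C, c ≠ 0 → d ≤ hammingNorm c) {S : Finset ι} (hS : #S < d) :
    #{c ∈ nonzeroCodewords C | hammingSupport c ⊆ S} = 0 := by
  refine card_eq_zero.2 (filter_eq_empty_iff.2 fun c hc hsub => ?_)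
  simp only [nonzeroCodewords, mem_filter, mem_univ, true_and] at hc
  have hle : hammingNorm c ≤ #S := card_le_card hsub
  have := hd c hc.1 hc.2
  omega

theorem sum_card_filter_hammingSupport_subset_eq {d : ℕ}
    (hd : ∀ c ∈ C, c ≠ 0 → d ≤ hammingNorm c) :
    ∑ S ∈ powersetCard d univ, #{c ∈ nonzeroCodewords C | hammingSupport c ⊆ S} =
      #{c ∈ nonzeroCodewords C | #(hammingSupport c) = d} := by
  calc ∑ S ∈ powersetCard d univ, #{c ∈ nonzeroCodewords C | hammingSupport c ⊆ S}
      = ∑ S ∈ powersetCard d univ, #{c ∈ nonzeroCodewords C | hammingSupport c = S} := by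
        refine sum_congr rfl fun S hS => congrArg card (filter_congr fun c hc => ?_)
        simp only [nonzeroCodewords, mem_filter, mem_univ, true_and] at hc
        refine ⟨fun hsub => eq_of_subset_of_card_le hsub ?_, fun h => h.subset⟩
        rw [(mem_powersetCard.1 hS).2]
        exact hd c hc.1 hc.2
    _ = _ := by
        rw [sum_card_filter_eq_card_filter_mem]
        simp only [mem_powersetCard, subset_univ, true_and]

theorem card_filter_hammingSupport_subset_add_one {d : ℕ}
    (hdual : ∀ v : ι → F, (∀ c ∈ C, v ⬝ᵥ c = 0) → v ≠ 0 → d ≤ hammingNorm v)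
    {S : Finset ι} (hS : #Sᶜ < d) :
    #{c ∈ nonzeroCodewords C | hammingSupport c ⊆ S} + 1 =
      Fintype.card F ^ (Module.finrank F C - #Sᶜ) := by
  have hsurj := surjective_restrict_of_forall_dotProduct (C := C) (P := Sᶜ) fun v hv hvS => by
    by_contra hv0
    have := hdual v hv hv0
    have : hammingNorm v ≤ #Sᶜ := card_le_card (hammingSupport_subset_iff.2 hvS)
    omega
  rw [← card_filter_forall_eq_zero_of_surjective hsurj]
  have : ({c | c ∈ C ∧ ∀ i ∈ Sᶜ, c i = 0} : Finset (ι → F)) =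
      insert 0 {c ∈ nonzeroCodewords C | hammingSupport c ⊆ S} := by
    ext c
    simp only [nonzeroCodewords, mem_insert, mem_filter, mem_univ, true_and, mem_compl,
      hammingSupport_subset_iff]
    by_cases hc : c = 0
    · simp [hc, C.zero_mem]
    · simp [hc]
  rw [this, card_insert_of_notMem (by simp [nonzeroCodewords])]

theorem sum_card_filter_hammingSupport_subset_eq_of_lt {d i : ℕ}
    (hdual : ∀ v : ι → F, (∀ c ∈ C, v ⬝ᵥ c = 0) → v ≠ 0 → d ≤ hammingNorm v)
    (hi : Fintype.card ι - i < d) :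
    ∑ S ∈ powersetCard i univ, (#{c ∈ nonzeroCodewords C | hammingSupport c ⊆ S} : ℤ) =
      (Fintype.card ι).choose i *
        ((Fintype.card F : ℤ) ^ (Module.finrank F C - (Fintype.card ι - i)) - 1) := by
  rw [← card_univ, ← card_powersetCard, ← nsmul_eq_mul, ← sum_const]
  refine sum_congr rfl fun S hS => ?_
  have hSc : #Sᶜ = #(univ : Finset ι) - i := by rw [card_compl, (mem_powersetCard.1 hS).2]; rfl
  rw [eq_sub_iff_add_eq, ← hSc]
  exact_mod_cast card_filter_hammingSupport_subset_add_one hdual (hSc ▸ hi)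

end LinearCode

theorem stmt_16_general {F : Type*} [Field F] [Fintype F] [DecidableEq F] {n k : ℕ}
    (hkn : k < n)
    (C : Submodule F (Fin n → F)) (hdim : Module.finrank F C = k)
    (hminle : ∀ c ∈ C, c ≠ 0 → n - k ≤ hammingNorm c)
    (hdualle : ∀ v : Fin n → F, (∀ c ∈ C, ∑ j, v j * c j = 0) → v ≠ 0 → k ≤ hammingNorm v)
    (A : ℕ → ℕ)
    (hA : ∀ i, A i = Set.ncard {c : Fin n → F | c ∈ C ∧ hammingNorm c = i})
    (s : ℕ) (hsk : s ≤ k) :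
    (A (n - k + s) : ℤ) =
      (n.choose (k - s) : ℤ) *
          ∑ j ∈ Finset.range s,
            (-1) ^ j * ((n - k + s).choose j : ℤ) * ((Fintype.card F : ℤ) ^ (s - j) - 1) +
        (-1) ^ s * (k.choose s : ℤ) * (A (n - k) : ℤ) := by
  classical
  have hA' : ∀ i ≠ 0, A i = #{c ∈ nonzeroCodewords C | #(hammingSupport c) = i} :=
    fun i hi => (hA i).trans (ncard_setOf_hammingNorm_eq C hi)
  rw [hA' _ (by omega), hA' _ (by omega), card_filter_card_eq_sum_range, Fintype.card_fin]
  refine sum_range_alternating_eq_of_piecewise hsk hkn.le _ _ _ (fun i hi => ?_) ?_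
    fun i hi _ => ?_
  · exact sum_eq_zero fun S hS => by
      exact_mod_cast card_filter_hammingSupport_subset_eq_zero hminle
        (by rwa [(mem_powersetCard.1 hS).2])
  · exact_mod_cast sum_card_filter_hammingSupport_subset_eq hminle
  · rw [sum_card_filter_hammingSupport_subset_eq_of_lt hdualle
      (by rw [Fintype.card_fin]; omega), Fintype.card_fin,
      hdim, show k - (n - i) = i - (n - k) by omega]

theorem stmt_16 {F : Type*} [Field F] [Fintype F] [DecidableEq F] {n k : ℕ}
    (hk : 0 < k) (hkn : k < n)
    (C : Submodule F (Fin n → F)) (hdim : Module.finrank F C = k)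
    (hminle : ∀ c ∈ C, c ≠ 0 → n - k ≤ hammingNorm c)
    (hminex : ∃ c ∈ C, c ≠ 0 ∧ hammingNorm c = n - k)
    (hdualle : ∀ v : Fin n → F, (∀ c ∈ C, ∑ j, v j * c j = 0) → v ≠ 0 → k ≤ hammingNorm v)
    (hdualex : ∃ v : Fin n → F, (∀ c ∈ C, ∑ j, v j * c j = 0) ∧ v ≠ 0 ∧ hammingNorm v = k)
    (A : ℕ → ℕ)
    (hA : ∀ i, A i = Set.ncard {c : Fin n → F | c ∈ C ∧ hammingNorm c = i})
    (s : ℕ) (hs : 1 ≤ s) (hsk : s ≤ k) :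
    (A (n - k + s) : ℤ) =
      (n.choose (k - s) : ℤ) *
          ∑ j ∈ Finset.range s,
            (-1) ^ j * ((n - k + s).choose j : ℤ) * ((Fintype.card F : ℤ) ^ (s - j) - 1) +
        (-1) ^ s * (k.choose s : ℤ) * (A (n - k) : ℤ) :=
  stmt_16_general hkn C hdim hminle hdualle A hA s hsk
end
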